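/- (Theorem 1, over-reporting direction.) Let π0, π1 : [0,1] → [0,1] be a proper binarized scoring rule, let the agent have actual belief μ ∈ (0,1), influenced belief μ̂ ∈ (0,1) with μ̂ > μ, and state-dependent utilities with Δu0 > 0 and Δu1 > 0, and suppose the report p ∈ (0,1) is optimal for her (V(p) ≥ V(r) for all r ∈ [0,1]). Then p > μ if and only if EU(A) > EU(B). -/

import Mathlib

/-!
Subtracting the constant `(1 - μ) u₀(x̲) + μ u₁(x̲)`, the agent's expected utility of a report `r` is
`(1 - μ) Δu₀ π₀(r) + μ Δu₁ π₁(r)`, a positive multiple of the expected score of `r` under the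
risk-neutral belief `q = μ Δu₁ / ((1 - μ) Δu₀ + μ Δu₁)`. By properness the optimal report is `q`,
and `q > μ` exactly when `Δu₁ > Δu₀`. On the other hand `EU(A) - EU(B) = (μ̂ - μ)(Δu₁ - Δu₀) / 2`.
-/

open Set

noncomputable section

def expectedScore (pi0 pi1 : ℝ → ℝ) (q r : ℝ) : ℝ :=
  (1 - q) * pi0 r + q * pi1 r

def riskNeutralBelief (μ Δ0 Δ1 : ℝ) : ℝ :=
  μ * Δ1 / ((1 - μ) * Δ0 + μ * Δ1)

end

theorem eq_of_forall_expectedScore_le {pi0 pi1 : ℝ → ℝ}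
    (hproper : ∀ q ∈ Icc (0:ℝ) 1, ∀ r ∈ Icc (0:ℝ) 1, r ≠ q →
      expectedScore pi0 pi1 q r < expectedScore pi0 pi1 q q)
    {p q : ℝ} (hp : p ∈ Icc (0:ℝ) 1) (hq : q ∈ Icc (0:ℝ) 1)
    (hmax : ∀ r ∈ Icc (0:ℝ) 1, expectedScore pi0 pi1 q r ≤ expectedScore pi0 pi1 q p) :
    p = q := by
  by_contra hne
  exact (hmax q hq).not_gt (hproper q hq p hp hne)

section RiskNeutralBelief

variable {μ Δ0 Δ1 : ℝ}

theorem riskNeutralBelief_denom_pos (hμ : μ ∈ Icc (0:ℝ) 1) (hΔ0 : 0 < Δ0) (hΔ1 : 0 < Δ1) :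
    0 < (1 - μ) * Δ0 + μ * Δ1 := by
  rcases eq_or_lt_of_le hμ.1 with rfl | hμ0
  · simpa using hΔ0
  · have := mul_nonneg (sub_nonneg.2 hμ.2) hΔ0.le
    have := mul_pos hμ0 hΔ1
    linarith

theorem riskNeutralBelief_mem_Icc (hμ : μ ∈ Icc (0:ℝ) 1) (hΔ0 : 0 < Δ0) (hΔ1 : 0 < Δ1) :
    riskNeutralBelief μ Δ0 Δ1 ∈ Icc (0:ℝ) 1 := by
  have hD := riskNeutralBelief_denom_pos hμ hΔ0 hΔ1
  refine ⟨div_nonneg (mul_nonneg hμ.1 hΔ1.le) hD.le, (div_le_one hD).2 ?_⟩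
  nlinarith [mul_nonneg (sub_nonneg.2 hμ.2) hΔ0.le]

theorem mul_expectedScore_riskNeutralBelief (pi0 pi1 : ℝ → ℝ) (r : ℝ)
    (hD : (1 - μ) * Δ0 + μ * Δ1 ≠ 0) :
    ((1 - μ) * Δ0 + μ * Δ1) * expectedScore pi0 pi1 (riskNeutralBelief μ Δ0 Δ1) r =
      (1 - μ) * Δ0 * pi0 r + μ * Δ1 * pi1 r := by
  unfold expectedScore riskNeutralBelief
  field_simp
  ring

theorem lt_riskNeutralBelief_iff (hμ : μ ∈ Ioo (0:ℝ) 1) (hΔ0 : 0 < Δ0) (hΔ1 : 0 < Δ1) :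
    μ < riskNeutralBelief μ Δ0 Δ1 ↔ Δ0 < Δ1 := by
  have hD := riskNeutralBelief_denom_pos (Ioo_subset_Icc_self hμ) hΔ0 hΔ1
  have hμμ : 0 < μ * (1 - μ) := mul_pos hμ.1 (sub_pos.2 hμ.2)
  -- `μ Δ1 - μ D = μ (1 - μ) (Δ1 - Δ0)`
  rw [riskNeutralBelief, lt_div_iff₀ hD]
  constructor
  · intro hlt
    nlinarith
  · intro hlt
    nlinarith [mul_pos hμμ (sub_pos.2 hlt)]

end RiskNeutralBelief

theorem risky_gt_safe_iff {μ ν : ℝ} (hμν : μ < ν) (u0l u0h u1l u1h : ℝ) :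
    (1/2) * ((1 - μ) * u0l + μ * u1l) + (1/2) * ((1 - ν) * u0h + ν * u1h) >
      (1/2) * ((1 - μ) * u0h + μ * u1h) + (1/2) * ((1 - ν) * u0l + ν * u1l) ↔
    u0h - u0l < u1h - u1l := by
  rw [gt_iff_lt, ← sub_pos]
  have hdiff : (1/2) * ((1 - μ) * u0l + μ * u1l) + (1/2) * ((1 - ν) * u0h + ν * u1h) -
      ((1/2) * ((1 - μ) * u0h + μ * u1h) + (1/2) * ((1 - ν) * u0l + ν * u1l)) =
      (ν - μ) * ((u1h - u1l) - (u0h - u0l)) / 2 := by ring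
  rw [hdiff, div_pos_iff_of_pos_right two_pos, mul_pos_iff_of_pos_left (sub_pos.2 hμν), sub_pos]

theorem overreport_iff_risky_general
    (pi0 pi1 : ℝ → ℝ)
    (hproper : ∀ q ∈ Set.Icc (0:ℝ) 1, ∀ r ∈ Set.Icc (0:ℝ) 1, r ≠ q →
      (1 - q) * pi0 r + q * pi1 r < (1 - q) * pi0 q + q * pi1 q)
    (μ : ℝ) (hμ : μ ∈ Set.Ioo (0:ℝ) 1)
    (u0l u0h u1l u1h : ℝ) (hu0 : u0l < u0h) (hu1 : u1l < u1h)
    (ν : ℝ)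
    (h : μ < ν)
    (p : ℝ) (hp : p ∈ Set.Ioo (0:ℝ) 1)
    (hopt : ∀ r ∈ Set.Icc (0:ℝ) 1,
      (1 - μ) * (pi0 r * u0h + (1 - pi0 r) * u0l) + μ * (pi1 r * u1h + (1 - pi1 r) * u1l) ≤
      (1 - μ) * (pi0 p * u0h + (1 - pi0 p) * u0l) + μ * (pi1 p * u1h + (1 - pi1 p) * u1l))
    : p > μ ↔ (1/2) * ((1 - μ) * u0l + μ * u1l) + (1/2) * ((1 - ν) * u0h + ν * u1h) > (1/2) * ((1 - μ) * u0h + μ * u1h) + (1/2) * ((1 - ν) * u0l + ν * u1l) := by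
  have hΔ0 : 0 < u0h - u0l := sub_pos.2 hu0
  have hΔ1 : 0 < u1h - u1l := sub_pos.2 hu1
  set q := riskNeutralBelief μ (u0h - u0l) (u1h - u1l)
  have hD := riskNeutralBelief_denom_pos (Ioo_subset_Icc_self hμ) hΔ0 hΔ1
  have hq : q ∈ Icc (0:ℝ) 1 := riskNeutralBelief_mem_Icc (Ioo_subset_Icc_self hμ) hΔ0 hΔ1
  have hp_eq : p = q := by
    refine eq_of_forall_expectedScore_le hproper (Ioo_subset_Icc_self hp) hq fun r hr => ?_
    refine le_of_mul_le_mul_left ?_ hD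
    rw [mul_expectedScore_riskNeutralBelief _ _ _ hD.ne',
      mul_expectedScore_riskNeutralBelief _ _ _ hD.ne']
    linarith [hopt r hr]
  rw [risky_gt_safe_iff h, hp_eq, gt_iff_lt, lt_riskNeutralBelief_iff hμ hΔ0 hΔ1]

theorem overreport_iff_risky
    (pi0 pi1 : ℝ → ℝ)
    (hpi0 : ∀ r ∈ Set.Icc (0:ℝ) 1, pi0 r ∈ Set.Icc (0:ℝ) 1)
    (hpi1 : ∀ r ∈ Set.Icc (0:ℝ) 1, pi1 r ∈ Set.Icc (0:ℝ) 1)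
    (hproper : ∀ q ∈ Set.Icc (0:ℝ) 1, ∀ r ∈ Set.Icc (0:ℝ) 1, r ≠ q →
      (1 - q) * pi0 r + q * pi1 r < (1 - q) * pi0 q + q * pi1 q)
    (μ : ℝ) (hμ : μ ∈ Set.Ioo (0:ℝ) 1)
    (u0l u0h u1l u1h : ℝ) (hu0 : u0l < u0h) (hu1 : u1l < u1h)
    (ν : ℝ) (hν : ν ∈ Set.Ioo (0:ℝ) 1)
    (h : μ < ν)
    (p : ℝ) (hp : p ∈ Set.Ioo (0:ℝ) 1)
    (hopt : ∀ r ∈ Set.Icc (0:ℝ) 1,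
      (1 - μ) * (pi0 r * u0h + (1 - pi0 r) * u0l) + μ * (pi1 r * u1h + (1 - pi1 r) * u1l) ≤
      (1 - μ) * (pi0 p * u0h + (1 - pi0 p) * u0l) + μ * (pi1 p * u1h + (1 - pi1 p) * u1l))
    : p > μ ↔ (1/2) * ((1 - μ) * u0l + μ * u1l) + (1/2) * ((1 - ν) * u0h + ν * u1h) > (1/2) * ((1 - μ) * u0h + μ * u1h) + (1/2) * ((1 - ν) * u0l + ν * u1l) :=
  overreport_iff_risky_general pi0 pi1 hproper μ hμ u0l u0h u1l u1h hu0 hu1 ν h p hp hopt
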